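/- For any real constant c with 1 - cz ≠ 0, the transformation x̃ = (x(1+cz) - 2cy)/(1-cz), ỹ = (y(1-2cz) + cxz^2)/(1-cz)^2, z̃ = z/(1-cz) satisfies dỹ - z̃ dx̃ = λ·(dy - z dx) for some nonvanishing smooth function λ, i.e. it is a contact transformation. -/

import Mathlib

/-- The contact form ω = dy - z dx, evaluated at point `p` on tangent vector `v`. -/
def omegaForm (p v : ℝ × ℝ × ℝ) : ℝ := v.2.1 - p.2.2 * v.1

/-- The contact transformation generated by H = 2yz - xz². -/
noncomputable def Phi (c : ℝ) (p : ℝ × ℝ × ℝ) : ℝ × ℝ × ℝ :=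
  ((p.1 * (1 + c * p.2.2) - 2 * c * p.2.1) / (1 - c * p.2.2),
   (p.2.1 * (1 - 2 * c * p.2.2) + c * p.1 * p.2.2 ^ 2) / (1 - c * p.2.2) ^ 2,
   p.2.2 / (1 - c * p.2.2))

theorem stmt9 (c : ℝ) :
    ∃ lam : ℝ × ℝ × ℝ → ℝ,
      ContDiffOn ℝ (⊤ : ℕ∞) lam {p : ℝ × ℝ × ℝ | 1 - c * p.2.2 ≠ 0} ∧
      (∀ p : ℝ × ℝ × ℝ, 1 - c * p.2.2 ≠ 0 → lam p ≠ 0) ∧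
      (∀ p : ℝ × ℝ × ℝ, 1 - c * p.2.2 ≠ 0 → ∀ v : ℝ × ℝ × ℝ,
        omegaForm (Phi c p) (fderiv ℝ (Phi c) p v) = lam p * omegaForm p v) := by
  refine ⟨fun p => ((1 - c * p.2.2) ^ 2)⁻¹, ?_, ?_, ?_⟩
  · have hf : ContDiff ℝ (⊤ : ℕ∞) (fun p : ℝ × ℝ × ℝ => (1 - c * p.2.2) ^ 2) := by
      apply ContDiff.pow
      exact contDiff_const.sub (contDiff_const.mul (contDiff_snd.snd))
    exact hf.contDiffOn.inv (fun p hp => pow_ne_zero 2 hp)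
  · intro p hp
    exact inv_ne_zero (pow_ne_zero 2 hp)
  · intro p hp v
    have hx : HasFDerivAt (fun q : ℝ × ℝ × ℝ => q.1)
        (ContinuousLinearMap.fst ℝ ℝ (ℝ × ℝ)) p := hasFDerivAt_fst
    have hy : HasFDerivAt (fun q : ℝ × ℝ × ℝ => q.2.1)
        ((ContinuousLinearMap.fst ℝ ℝ ℝ).comp (ContinuousLinearMap.snd ℝ ℝ (ℝ × ℝ))) p :=
      hasFDerivAt_fst.comp p hasFDerivAt_snd
    have hz : HasFDerivAt (fun q : ℝ × ℝ × ℝ => q.2.2)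
        ((ContinuousLinearMap.snd ℝ ℝ ℝ).comp (ContinuousLinearMap.snd ℝ ℝ (ℝ × ℝ))) p :=
      hasFDerivAt_snd.comp p hasFDerivAt_snd
    have hden := (hasFDerivAt_const (1 : ℝ) p).sub (hz.const_mul c)
    have hinv1 := (hasFDerivAt_inv' (𝕜 := ℝ) hp).comp p hden
    have hinv2 := (hasFDerivAt_inv' (𝕜 := ℝ) (mul_ne_zero hp hp)).comp p (hden.mul hden)
    have h1 := ((hx.mul ((hasFDerivAt_const (1 : ℝ) p).add (hz.const_mul c))).sub
        (hy.const_mul (2 * c))).mul hinv1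
    have h2 := ((hy.mul ((hasFDerivAt_const (1 : ℝ) p).sub (hz.const_mul (2 * c)))).add
        ((hx.const_mul c).mul (hz.mul hz))).mul hinv2
    have h3 := hz.mul hinv1
    have hP := (HasFDerivAt.prodMk h1 (HasFDerivAt.prodMk h2 h3)).congr_of_eventuallyEq (f₁ := Phi c)
      (Filter.Eventually.of_forall fun q => by
        simp [Phi, div_eq_mul_inv, pow_two, Function.comp])
    rw [hP.fderiv]
    simp only [ContinuousLinearMap.prod_apply, ContinuousLinearMap.add_apply,
      ContinuousLinearMap.sub_apply, ContinuousLinearMap.smul_apply,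
      ContinuousLinearMap.comp_apply, ContinuousLinearMap.coe_fst',
      ContinuousLinearMap.coe_snd', ContinuousLinearMap.zero_apply,
      ContinuousLinearMap.neg_apply, ContinuousLinearMap.mulLeftRight_apply,
      smul_eq_mul, omegaForm, Phi, Pi.mul_apply, Pi.add_apply, Pi.sub_apply,
      Function.comp_apply]
    field_simp
    ring
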